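/- Let (G,·,N,⋆,⊙) be a skew bracoid and suppose that the action ⊙ is also free (i.e., |G| = |N|, equivalently the stabilizer of e_N is trivial). Define a binary operation ∘ on N by (g ⊙ e_N) ∘ (h ⊙ e_N) = (g·h) ⊙ e_N. Then ∘ is well defined, (N,∘) is a group, and (N,⋆,∘) is a skew brace. -/
import Mathlib


/-- A skew bracoid structure: `(G,·)` and `(N,⋆)` are groups (written
multiplicatively) and `act` is a transitive action of `G` on `N` satisfying
the skew bracoid relation. -/
def IsSkewBracoid {G N : Type*} [Group G] [Group N] (act : G → N → N) : Prop :=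
  (∀ η, act 1 η = η) ∧
  (∀ g k η, act (g * k) η = act g (act k η)) ∧
  (∀ η μ : N, ∃ g, act g η = μ) ∧
  (∀ g η μ, act g (η * μ) = act g η * (act g 1)⁻¹ * act g μ)


/-- A second group structure `(m, e, i)` on a type `N`. -/
structure SkewBraceOps (N : Type*) where
  m : N → N → N
  e : N
  i : N → N
  assoc : ∀ a b c, m (m a b) c = m a (m b c)
  e_m : ∀ a, m e a = a
  m_e : ∀ a, m a e = a
  i_m : ∀ a, m (i a) a = e

/-- `(N,⋆,∘)` is a skew brace (`⋆` the `Group N` law, `∘` the second structure). -/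
def IsSkewBrace {N : Type*} [Group N] (S : SkewBraceOps N) : Prop :=
  ∀ a b c : N, S.m a (b * c) = S.m a b * a⁻¹ * S.m a c

/-- a skew bracoid whose action is also free (trivial stabilizer
of `e_N`) is essentially a skew brace: transporting the group structure of `G`
to `N` by `(g ⊙ e) ∘ (k ⊙ e) = (g·k) ⊙ e` is well defined and makes
`(N,⋆,∘)` a skew brace. -/
theorem free_skewBracoid_is_skewBrace {G N : Type*} [Group G] [Group N]
    [Finite G] [Finite N]
    (act : G → N → N) (h : IsSkewBracoid act)
    (hfree : ∀ g : G, act g 1 = 1 → g = 1) :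
    ∃ S : SkewBraceOps N,
      (∀ g k : G, S.m (act g 1) (act k 1) = act (g * k) 1) ∧
      IsSkewBrace S := by
  obtain ⟨h1, hmul, htrans, hbr⟩ := h
  -- choose σ a with act (σ a) 1 = a
  choose σ hσ using fun a => htrans 1 a
  have hσ' : ∀ a, act (σ a) 1 = a := hσ
  -- uniqueness
  have huniq : ∀ (g : G) (a : N), act g 1 = a → σ a = g := by
    intro g a hg
    have : act (g⁻¹ * σ a) 1 = 1 := by
      rw [hmul, hσ' a, ← hg, ← hmul, inv_mul_cancel, h1]
    have := hfree _ this
    have := congrArg (g * ·) this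
    simpa [mul_assoc] using this
  have key : ∀ (g : G) (b : N), act g b = act (g * σ b) 1 := by
    intro g b
    rw [hmul, hσ' b]
  refine ⟨⟨fun a b => act (σ a) b, 1, fun a => act (σ a)⁻¹ 1, ?_, ?_, ?_, ?_⟩, ?_, ?_⟩
  · intro a b c
    have h1' : σ (act (σ a) b) = σ a * σ b := huniq _ _ (key (σ a) b).symm
    simp only [h1', hmul]
  · intro a
    have : σ (1 : N) = 1 := huniq 1 1 (by rw [h1])
    simp [this, h1]
  · intro a; exact hσ' a
  · intro a
    have : σ (act (σ a)⁻¹ 1) = (σ a)⁻¹ := huniq _ _ rfl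
    show act (σ (act (σ a)⁻¹ 1)) a = 1
    rw [this]
    have h2 : act ((σ a)⁻¹ * σ a) 1 = act (σ a)⁻¹ a := by rw [hmul, hσ']
    rw [← h2, inv_mul_cancel, h1]
  · intro g k
    have : σ (act g 1) = g := huniq g _ rfl
    simp only [this, ← hmul]
  · intro a b c
    have := hbr (σ a) b c
    rwa [hσ' a] at this
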